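/- arXiv:1702.01256 — 4 statements merged into one kernel-verified Lean document; each statement's English description precedes it below -/
import Mathlib

section
/- Let b : ℝ⁴ → ℝ⁴ be the Hodgkin–Huxley vector field b(p₁,p₂,p₃,v) = (α_m(v)(1−p₁) − β_m(v)p₁, α_h(v)(1−p₂) − β_h(v)p₂, α_n(v)(1−p₃) − β_n(v)p₃, C⁻¹(I − ḡ_Na·p₁³p₂(v − E_Na) − ḡ_K·p₃⁴(v − E_K) − ḡ_L·(v − E_L))), where C, ḡ_Na, ḡ_K, ḡ_L > 0 and I, E_Na, E_K, E_L ∈ ℝ are constants and the rate functions are strictly positive on ℝ. Then for every x in K = [0,1]³ × ℝ and every s ∈ ℝ⁴ satisfying ⟨s, y − x⟩ ≤ 0 for all y ∈ K, one has ⟨s, b(x)⟩ ≤ 0. -/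
/-- The Hodgkin–Huxley vector field on `ℝ⁴` (coordinates `(p₁, p₂, p₃, v)`),
with abstract rate functions. -/
noncomputable def hhVectorField (am bm ah bh an bn : ℝ → ℝ)
    (C gNa gK gL I ENa EK EL : ℝ) (x : Fin 4 → ℝ) : Fin 4 → ℝ :=
  ![am (x 3) * (1 - x 0) - bm (x 3) * x 0,
    ah (x 3) * (1 - x 1) - bh (x 3) * x 1,
    an (x 3) * (1 - x 2) - bn (x 3) * x 2,
    C⁻¹ * (I - gNa * (x 0) ^ 3 * x 1 * (x 3 - ENa)
             - gK * (x 2) ^ 4 * (x 3 - EK) - gL * (x 3 - EL))]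

open Function Set

/-!
The normal cone of a product of sets is the product of the normal cones, so `s` is
normal to `[0,1]` in each gating coordinate and `s₃ = 0` in the unconstrained voltage
coordinate. The voltage equation therefore drops out, and each gating component
`a (1 - p) - b p` with `a, b ≥ 0` points into `[0,1]`.
-/

theorem mul_sub_nonpos_of_update_mem {ι : Type*} [Fintype ι] [DecidableEq ι]
    {K : Set (ι → ℝ)} {s x : ι → ℝ} (hs : ∀ y ∈ K, ∑ j, s j * (y j - x j) ≤ 0)
    {j : ι} {c : ℝ} (hc : update x j c ∈ K) : s j * (c - x j) ≤ 0 := by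
  have h := hs _ hc
  rwa [Fintype.sum_eq_single j fun k hk => by rw [update_of_ne hk, sub_self, mul_zero],
    update_self] at h

theorem eq_zero_of_forall_mul_sub_nonpos {s p : ℝ} (h : ∀ c, s * (c - p) ≤ 0) : s = 0 := by
  have hup := h (p + 1)
  have hdown := h (p - 1)
  simp only [add_sub_cancel_left, sub_sub_cancel_left, mul_one, mul_neg] at hup hdown
  linarith

theorem mul_relaxation_nonpos_of_normal_Icc {s p a b : ℝ}
    (h : ∀ c ∈ Icc (0 : ℝ) 1, s * (c - p) ≤ 0) (ha : 0 ≤ a) (hb : 0 ≤ b) :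
    s * (a * (1 - p) - b * p) ≤ 0 := by
  have hone := h 1 (right_mem_Icc.mpr zero_le_one)
  have hzero := h 0 (left_mem_Icc.mpr zero_le_one)
  have : s * (a * (1 - p) - b * p) = a * (s * (1 - p)) + b * (s * (0 - p)) := by ring
  rw [this]
  exact add_nonpos (mul_nonpos_of_nonneg_of_nonpos ha hone)
    (mul_nonpos_of_nonneg_of_nonpos hb hzero)

section GatingBox

variable {n : ℕ} {x : Fin (n + 1) → ℝ}

theorem update_last_mem_gatingBox (hx : ∀ i : Fin n, x i.castSucc ∈ Icc (0 : ℝ) 1) (c : ℝ)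
    (i : Fin n) : update x (Fin.last n) c i.castSucc ∈ Icc (0 : ℝ) 1 := by
  rw [update_of_ne (Fin.castSucc_lt_last i).ne]
  exact hx i

theorem update_castSucc_mem_gatingBox (hx : ∀ i : Fin n, x i.castSucc ∈ Icc (0 : ℝ) 1)
    (j : Fin n) {c : ℝ} (hc : c ∈ Icc (0 : ℝ) 1) (i : Fin n) :
    update x j.castSucc c i.castSucc ∈ Icc (0 : ℝ) 1 := by
  rcases eq_or_ne i j with rfl | hij
  · rwa [update_self]
  · rw [update_of_ne (Fin.castSucc_injective n |>.ne hij)]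
    exact hx i

end GatingBox

theorem hh_drift_tangency_general (am bm ah bh an bn : ℝ → ℝ)
    (ham : ∀ v, 0 < am v) (hbm : ∀ v, 0 < bm v)
    (hah : ∀ v, 0 < ah v) (hbh : ∀ v, 0 < bh v)
    (han : ∀ v, 0 < an v) (hbn : ∀ v, 0 < bn v)
    (C gNa gK gL : ℝ)
    (I ENa EK EL : ℝ)
    (x : Fin 4 → ℝ) (hx : ∀ i : Fin 3, x i.castSucc ∈ Set.Icc (0 : ℝ) 1)
    (s : Fin 4 → ℝ)
    (hs : ∀ y : Fin 4 → ℝ, (∀ i : Fin 3, y i.castSucc ∈ Set.Icc (0 : ℝ) 1) →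
        ∑ j, s j * (y j - x j) ≤ 0) :
    ∑ j, s j * hhVectorField am bm ah bh an bn C gNa gK gL I ENa EK EL x j ≤ 0 := by
  have hvoltage : s 3 = 0 := eq_zero_of_forall_mul_sub_nonpos fun c =>
    mul_sub_nonpos_of_update_mem hs (update_last_mem_gatingBox hx c)
  have hgate (j : Fin 3) {a b : ℝ} (ha : 0 < a) (hb : 0 < b) :
      s j.castSucc * (a * (1 - x j.castSucc) - b * x j.castSucc) ≤ 0 :=
    mul_relaxation_nonpos_of_normal_Icc
      (fun _ hc => mul_sub_nonpos_of_update_mem hs (update_castSucc_mem_gatingBox hx j hc))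
      ha.le hb.le
  have hm : s 0 * (am (x 3) * (1 - x 0) - bm (x 3) * x 0) ≤ 0 := hgate 0 (ham _) (hbm _)
  have hh : s 1 * (ah (x 3) * (1 - x 1) - bh (x 3) * x 1) ≤ 0 := hgate 1 (hah _) (hbh _)
  have hn : s 2 * (an (x 3) * (1 - x 2) - bn (x 3) * x 2) ≤ 0 := hgate 2 (han _) (hbn _)
  simp only [hhVectorField, Fin.sum_univ_four, Matrix.cons_val_zero, Matrix.cons_val_one,
    Matrix.cons_val_two, Matrix.head_cons, Matrix.tail_cons, Matrix.cons_val_three, hvoltage,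
    zero_mul, add_zero]
  linarith

/-- Drift part of the viability (tangency) condition for `K = [0,1]³ × ℝ`:
for every `x ∈ K` and every `s` in the normal cone `N_K(x)`,
one has `⟨s, b(x)⟩ ≤ 0`, where `b` is the Hodgkin–Huxley vector field. -/
theorem hh_drift_tangency (am bm ah bh an bn : ℝ → ℝ)
    (ham : ∀ v, 0 < am v) (hbm : ∀ v, 0 < bm v)
    (hah : ∀ v, 0 < ah v) (hbh : ∀ v, 0 < bh v)
    (han : ∀ v, 0 < an v) (hbn : ∀ v, 0 < bn v)
    (C gNa gK gL : ℝ) (hC : 0 < C) (hgNa : 0 < gNa) (hgK : 0 < gK) (hgL : 0 < gL)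
    (I ENa EK EL : ℝ)
    (x : Fin 4 → ℝ) (hx : ∀ i : Fin 3, x i.castSucc ∈ Set.Icc (0 : ℝ) 1)
    (s : Fin 4 → ℝ)
    (hs : ∀ y : Fin 4 → ℝ, (∀ i : Fin 3, y i.castSucc ∈ Set.Icc (0 : ℝ) 1) →
        ∑ j, s j * (y j - x j) ≤ 0) :
    ∑ j, s j * hhVectorField am bm ah bh an bn C gNa gK gL I ENa EK EL x j ≤ 0 :=
  hh_drift_tangency_general am bm ah bh an bn ham hbm hah hbh han hbn C gNa gK gL I ENa EK EL x hx s
    hs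
end

section
/- Let T > 0, let V : [0,T] → ℝ be continuous, let α, β : ℝ → ℝ be continuous with α(v) > 0 and β(v) > 0 for all v ∈ ℝ, and let n₀ ∈ [0,1]. Then the ordinary differential equation ṅ(t) = α(V(t))(1 − n(t)) − β(V(t))n(t) with n(0) = n₀ has a unique solution n on [0,T], and this solution satisfies n(t) ∈ [0,1] for every t ∈ [0,T]. -/
/-!
With `a = α ∘ V` and `c = (α + β) ∘ V` the gating equation is the scalar linear equation
`ẋ = a - c x`. Multiplying by the integrating factor `E = exp ∫₀ᵗ c` turns it into
`(E x)' = E a`, so every solution is given by the variation-of-constants formula; this yields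
existence and uniqueness at once. Viability: the formula is nonnegative when `a ≥ 0` and
`x₀ ≥ 0`, and `1 - x` solves the same kind of equation with `c - a ≥ 0` in place of `a`.
-/

open Set Real intervalIntegral

namespace LinearODE

variable {a c : ℝ → ℝ}

noncomputable def integratingFactor (c : ℝ → ℝ) (t : ℝ) : ℝ :=
  exp (∫ s in (0 : ℝ)..t, c s)

/-- The solution of `ẋ = a t - c t * x`, `x 0 = x₀`. -/
noncomputable def solution (a c : ℝ → ℝ) (x₀ t : ℝ) : ℝ :=
  (integratingFactor c t)⁻¹ * (x₀ + ∫ s in (0 : ℝ)..t, integratingFactor c s * a s)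

theorem hasDerivAt_integratingFactor (hc : Continuous c) (t : ℝ) :
    HasDerivAt (integratingFactor c) (c t * integratingFactor c t) t :=
  (hc.integral_hasStrictDerivAt 0 t).hasDerivAt.exp.congr_deriv (mul_comm _ _)

theorem continuous_integratingFactor (hc : Continuous c) : Continuous (integratingFactor c) :=
  continuous_iff_continuousAt.2 fun t => (hasDerivAt_integratingFactor hc t).continuousAt

theorem integratingFactor_pos (c : ℝ → ℝ) (t : ℝ) : 0 < integratingFactor c t :=
  exp_pos _

@[simp]
theorem solution_zero (a c : ℝ → ℝ) (x₀ : ℝ) : solution a c x₀ 0 = x₀ := by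
  simp [solution, integratingFactor]

theorem hasDerivAt_solution (ha : Continuous a) (hc : Continuous c) (x₀ t : ℝ) :
    HasDerivAt (solution a c x₀) (a t - c t * solution a c x₀ t) t := by
  have hE := hasDerivAt_integratingFactor hc t
  have hI := ((continuous_integratingFactor hc).mul ha).integral_hasStrictDerivAt 0 t
  have hE₀ := (integratingFactor_pos c t).ne'
  refine ((hE.inv hE₀).mul (hI.hasDerivAt.const_add x₀)).congr_deriv ?_
  simp only [solution, Pi.mul_apply, Pi.inv_apply]
  field_simp
  ring

theorem eqOn_solution (ha : Continuous a) (hc : Continuous c) {x : ℝ → ℝ} {T : ℝ}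
    (hx : ∀ t ∈ Icc 0 T, HasDerivWithinAt x (a t - c t * x t) (Icc 0 T) t) :
    EqOn x (solution a c (x 0)) (Icc 0 T) := by
  have hEa : Continuous fun s => integratingFactor c s * a s :=
    (continuous_integratingFactor hc).mul ha
  have hEx : ∀ t ∈ Ico 0 T, HasDerivWithinAt (fun s => integratingFactor c s * x s)
      (integratingFactor c t * a t) (Ici t) t := by
    intro t ht
    have := ((hasDerivAt_integratingFactor hc t).hasDerivWithinAt.mul
      (hx t (Ico_subset_Icc_self ht))).mono_of_mem_nhdsWithin (Icc_mem_nhdsGE_of_mem ht)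
    exact this.congr_deriv (by ring)
  have hF : ∀ t, HasDerivAt (fun t => x 0 + ∫ s in (0 : ℝ)..t, integratingFactor c s * a s)
      (integratingFactor c t * a t) t := fun t =>
    (hEa.integral_hasStrictDerivAt 0 t).hasDerivAt.const_add _
  have hxc : ContinuousOn x (Icc 0 T) := fun t ht => (hx t ht).continuousWithinAt
  have hEx_eq := eq_of_has_deriv_right_eq hEx (fun t _ => (hF t).hasDerivWithinAt)
    ((continuous_integratingFactor hc).continuousOn.mul hxc)
    (fun t _ => (hF t).continuousAt.continuousWithinAt) (by simp [integratingFactor])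
  intro t ht
  rw [solution, ← hEx_eq t ht, inv_mul_cancel_left₀ (integratingFactor_pos c t).ne']

theorem solution_nonneg (ha : ∀ s, 0 ≤ a s) {x₀ t : ℝ} (hx₀ : 0 ≤ x₀) (ht : 0 ≤ t) :
    0 ≤ solution a c x₀ t :=
  mul_nonneg (inv_nonneg.2 (integratingFactor_pos c t).le) <| add_nonneg hx₀ <|
    integral_nonneg ht fun s _ => mul_nonneg (integratingFactor_pos c s).le (ha s)

theorem solution_mem_Icc (ha : Continuous a) (hc : Continuous c) (ha₀ : ∀ s, 0 ≤ a s)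
    (hac : ∀ s, a s ≤ c s) {x₀ t : ℝ} (hx₀ : x₀ ∈ Icc 0 1) (ht : 0 ≤ t) :
    solution a c x₀ t ∈ Icc 0 1 := by
  refine ⟨solution_nonneg ha₀ hx₀.1 ht, sub_nonneg.1 ?_⟩
  have hy : ∀ s ∈ Icc 0 t, HasDerivWithinAt (fun s => 1 - solution a c x₀ s)
      ((c s - a s) - c s * (1 - solution a c x₀ s)) (Icc 0 t) s := fun s _ =>
    ((hasDerivAt_solution ha hc x₀ s).const_sub 1).hasDerivWithinAt.congr_deriv (by ring)
  have hsym : 1 - solution a c x₀ t = solution (c - a) c (1 - x₀) t := by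
    simpa using eqOn_solution (hc.sub ha) hc hy ⟨ht, le_rfl⟩
  rw [hsym]
  exact solution_nonneg (fun s => sub_nonneg.2 (hac s)) (sub_nonneg.2 hx₀.2) ht

end LinearODE

open LinearODE

/-- Generic Hodgkin–Huxley gating equation: for a continuous voltage signal `V`
on `[0,T]`, continuous strictly positive rate functions `α, β` and an initial
condition `n₀ ∈ [0,1]`, the ODE `ṅ = α(V(t))(1 - n) - β(V(t)) n`, `n(0) = n₀`,
has a unique solution on `[0,T]`, and this solution takes values in `[0,1]`. -/
theorem gating_ode_existence_uniqueness_viability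
    (T : ℝ) (hT : 0 < T) (V : ℝ → ℝ) (hV : ContinuousOn V (Set.Icc 0 T))
    (α β : ℝ → ℝ) (hαc : Continuous α) (hβc : Continuous β)
    (hα : ∀ v, 0 < α v) (hβ : ∀ v, 0 < β v)
    (n₀ : ℝ) (hn₀ : n₀ ∈ Set.Icc (0 : ℝ) 1) :
    (∃ n : ℝ → ℝ, n 0 = n₀ ∧
        (∀ t ∈ Set.Icc 0 T,
          HasDerivWithinAt n (α (V t) * (1 - n t) - β (V t) * n t) (Set.Icc 0 T) t) ∧
        (∀ t ∈ Set.Icc 0 T, n t ∈ Set.Icc (0 : ℝ) 1)) ∧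
    (∀ n₁ n₂ : ℝ → ℝ,
        (n₁ 0 = n₀ ∧ ∀ t ∈ Set.Icc 0 T,
          HasDerivWithinAt n₁ (α (V t) * (1 - n₁ t) - β (V t) * n₁ t) (Set.Icc 0 T) t) →
        (n₂ 0 = n₀ ∧ ∀ t ∈ Set.Icc 0 T,
          HasDerivWithinAt n₂ (α (V t) * (1 - n₂ t) - β (V t) * n₂ t) (Set.Icc 0 T) t) →
        Set.EqOn n₁ n₂ (Set.Icc 0 T)) := by
  set W : ℝ → ℝ := fun t => V (projIcc 0 T hT.le t)
  have hW : Continuous W := hV.comp_continuous (continuous_subtype_val.comp continuous_projIcc) fun t => (projIcc 0 T hT.le t).2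
  set a : ℝ → ℝ := fun t => α (W t)
  set c : ℝ → ℝ := fun t => α (W t) + β (W t)
  have ha : Continuous a := hαc.comp hW
  have hc : Continuous c := (hαc.comp hW).add (hβc.comp hW)
  have hrhs : ∀ t ∈ Icc 0 T, ∀ x, α (V t) * (1 - x) - β (V t) * x = a t - c t * x := by
    intro t ht x
    simp only [a, c, W, projIcc_of_mem hT.le ht]
    ring
  refine ⟨⟨solution a c n₀, solution_zero a c n₀, fun t ht => ?_, fun t ht => ?_⟩, ?_⟩
  · rw [hrhs t ht]
    exact (hasDerivAt_solution ha hc n₀ t).hasDerivWithinAt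
  · exact solution_mem_Icc ha hc (fun s => (hα _).le)
      (fun s => le_add_of_nonneg_right (hβ _).le) hn₀ ht.1
  · rintro n₁ n₂ ⟨h₁0, h₁⟩ ⟨h₂0, h₂⟩
    have e₁ := eqOn_solution ha hc fun t ht => hrhs t ht (n₁ t) ▸ h₁ t ht
    have e₂ := eqOn_solution ha hc fun t ht => hrhs t ht (n₂ t) ▸ h₂ t ht
    rw [h₁0] at e₁
    rw [h₂0] at e₂
    exact e₁.trans e₂.symm
end

section
/- Let K ⊂ ℝ^d be a closed convex set and let b : ℝ^d → ℝ^d be continuously differentiable and Lipschitz continuous, so that for every x₀ ∈ ℝ^d the equation Ẋ(t) = b(X(t)), X(0) = x₀ has a unique solution on [0,T]. Then the following are equivalent: (i) for every x₀ ∈ K, the solution satisfies X(t) ∈ K for all t ∈ [0,T]; (ii) for every x ∈ ∂K and every s ∈ ℝ^d with ⟨s, y − x⟩ ≤ 0 for all y ∈ K, one has ⟨s, b(x)⟩ ≤ 0. -/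
/-!
Necessity: if `x ∈ ∂K` and `s` is normal to `K` at `x`, then along the trajectory from `x`,
which stays in `K`, the function `t ↦ ⟪s, X t⟫` is maximal at `t = 0`, so Fermat's rule gives
`⟪s, b x⟫ ≤ 0`. The trajectory exists on all of `[0, T]` because a Lipschitz field admits
Picard–Lindelöf steps of a length `(1 + L)⁻¹` independent of the initial point.

Sufficiency: let `g t = dist (X t, K)²` and let `p` be the nearest point of `K` to `X t`. Then
`g ≤ ‖X · - p‖²` with equality at `t`, and the right derivative of the latter at `t` is
`2⟪X t - p, b (X t)⟫ ≤ 2⟪X t - p, b (X t) - b p⟫ ≤ 2 L g t`, since `X t - p` is normal to `K`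
at `p`, which lies on `∂K` unless `X t = p`. Grönwall's inequality and `g 0 = 0` give `g = 0`.
-/

open Set Metric Filter
open scoped RealInnerProductSpace Topology NNReal

section Existence

variable {E : Type*} [NormedAddCommGroup E]

theorem hasDerivWithinAt_Icc_ite [NormedSpace ℝ E] {v : ℝ → E → E} {X Z : ℝ → E} {a b c : ℝ}
    (hab : a ≤ b) (hbc : b ≤ c) (hXZ : X b = Z b)
    (hX : ∀ t ∈ Icc a b, HasDerivWithinAt X (v t (X t)) (Icc a b) t)
    (hZ : ∀ t ∈ Icc b c, HasDerivWithinAt Z (v t (Z t)) (Icc b c) t) :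
    ∀ t ∈ Icc a c, HasDerivWithinAt (fun s ↦ if s ≤ b then X s else Z s)
      (v t (if t ≤ b then X t else Z t)) (Icc a c) t := by
  set Y : ℝ → E := fun s ↦ if s ≤ b then X s else Z s
  have hYX : EqOn Y X (Icc a b) := fun s hs ↦ if_pos hs.2
  have hYZ : EqOn Y Z (Icc b c) := fun s hs ↦ by
    rcases hs.1.eq_or_lt with rfl | hbs
    · simp [Y, hXZ]
    · simp [Y, hbs.not_ge]
  intro t ht
  change HasDerivWithinAt Y (v t (Y t)) _ t
  rw [← Icc_union_Icc_eq_Icc hab hbc]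
  refine HasDerivWithinAt.union ?_ ?_
  · by_cases htb : t ≤ b
    · have ht' : t ∈ Icc a b := ⟨ht.1, htb⟩
      rw [show Y t = X t from hYX ht']
      exact (hX t ht').congr_of_mem hYX ht'
    · exact hasDerivWithinAt_iff_hasFDerivWithinAt.2 <| .of_notMem_closure <| by
        rw [closure_Icc]; exact fun h ↦ htb h.2
  · by_cases hbt : b ≤ t
    · have ht' : t ∈ Icc b c := ⟨hbt, ht.2⟩
      rw [show Y t = Z t from hYZ ht']
      exact (hZ t ht').congr_of_mem hYZ ht'
    · exact hasDerivWithinAt_iff_hasFDerivWithinAt.2 <| .of_notMem_closure <| by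
        rw [closure_Icc]; exact fun h ↦ hbt h.1

theorem LipschitzWith.isPicardLindelof {b : E → E} {L : ℝ≥0} (hb : LipschitzWith L b)
    (x₀ : E) (τ : ℝ) :
    IsPicardLindelof (fun _ ↦ b) (tmin := τ) (tmax := τ + (1 + L : ℝ)⁻¹)
      ⟨τ, le_rfl, by simp only [le_add_iff_nonneg_right]; positivity⟩
      x₀ ‖b x₀‖₊ 0 ((1 + L) * ‖b x₀‖₊) L := by
  refine .of_time_independent (fun x hx ↦ ?_) hb.lipschitzOnWith ?_
  · have hx : ‖x - x₀‖ ≤ ‖b x₀‖ := by simpa [dist_eq_norm] using hx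
    calc ‖b x‖ ≤ ‖b x₀‖ + L * ‖x - x₀‖ := by
          linarith [hb.norm_sub_le x x₀, norm_le_norm_add_norm_sub' (b x) (b x₀)]
      _ ≤ ‖b x₀‖ + L * ‖b x₀‖ := by gcongr
      _ = _ := by push_cast; ring
  · have hL : (0 : ℝ) < 1 + L := by positivity
    simp [max_eq_left (inv_nonneg.2 hL.le), mul_right_comm _ ‖b x₀‖, hL.ne']

theorem LipschitzWith.exists_forall_mem_Icc_hasDerivWithinAt [NormedSpace ℝ E] [CompleteSpace E]
    {b : E → E} {L : ℝ≥0} (hb : LipschitzWith L b) (x₀ : E) (T : ℝ) :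
    ∃ X : ℝ → E, X 0 = x₀ ∧ ∀ t ∈ Icc 0 T, HasDerivWithinAt X (b (X t)) (Icc 0 T) t := by
  set h : ℝ := (1 + L : ℝ)⁻¹
  have hh : 0 < h := by positivity
  have step : ∀ n : ℕ, ∃ X : ℝ → E, X 0 = x₀ ∧
      ∀ t ∈ Icc 0 (n * h), HasDerivWithinAt X (b (X t)) (Icc 0 (n * h)) t := by
    intro n
    induction n with
    | zero =>
      rw [Nat.cast_zero, zero_mul, Icc_self]
      exact ⟨fun _ ↦ x₀, rfl, fun _ _ ↦ hasDerivWithinAt_iff_hasFDerivWithinAt.2 .singleton⟩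
    | succ n ih =>
      obtain ⟨X, hX0, hX⟩ := ih
      obtain ⟨Z, hZ0, hZ⟩ :=
        (hb.isPicardLindelof (X (n * h)) (n * h)).exists_eq_forall_mem_Icc_hasDerivWithinAt₀
      refine ⟨fun s ↦ if s ≤ n * h then X s else Z s, by
        simp [hX0, (by positivity : (0 : ℝ) ≤ n * h)], ?_⟩
      rw [Nat.cast_succ, add_one_mul]
      exact hasDerivWithinAt_Icc_ite (v := fun _ ↦ b) (by positivity) (by linarith) hZ0.symm hX hZ
  obtain ⟨n, hn⟩ := exists_nat_ge (T / h)
  obtain ⟨X, hX0, hX⟩ := step n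
  have hTn : Icc 0 T ⊆ Icc 0 (n * h) := Icc_subset_Icc_right ((div_le_iff₀ hh).1 hn)
  exact ⟨X, hX0, fun t ht ↦ (hX t (hTn ht)).mono hTn⟩

end Existence

theorem frequently_slope_lt_of_le_of_hasDerivWithinAt {g ψ : ℝ → ℝ} {t c r : ℝ}
    (hψ : HasDerivWithinAt ψ c (Ici t) t) (hle : ∀ z, g z ≤ ψ z) (heq : g t = ψ t)
    (hr : c < r) : ∃ᶠ z in 𝓝[>] t, slope g t z < r := by
  have hslope := hψ.Ioi_of_Ici.limsup_slope_le' (lt_irrefl t) hr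
  refine (hslope.and self_mem_nhdsWithin).frequently.mono ?_
  rintro z ⟨hz, htz⟩
  refine lt_of_le_of_lt ?_ hz
  simp only [slope_def_field, heq]
  gcongr
  exact hle z

section NormalCone

variable {F : Type*} [NormedAddCommGroup F] [InnerProductSpace ℝ F]

def normalCone (K : Set F) (x : F) : Set F := {s | ∀ y ∈ K, ⟪s, y - x⟫ ≤ 0}

theorem eq_zero_of_mem_normalCone_of_mem_interior {K : Set F} {x s : F}
    (hx : x ∈ interior K) (hs : s ∈ normalCone K x) : s = 0 := by
  have hpath : Tendsto (fun ε : ℝ ↦ x + ε • s) (𝓝[>] 0) (𝓝 x) := by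
    have : Continuous (fun ε : ℝ ↦ x + ε • s) := by fun_prop
    simpa using (this.tendsto 0).mono_left nhdsWithin_le_nhds
  obtain ⟨ε, hεK, hε⟩ :=
    ((hpath.eventually (mem_interior_iff_mem_nhds.1 hx)).and self_mem_nhdsWithin).exists
  have h := hs _ hεK
  rw [add_sub_cancel_left, inner_smul_right, real_inner_self_eq_norm_sq] at h
  simpa using nonpos_of_mul_nonpos_right h hε

theorem inner_nonpos_of_mem_normalCone_of_frontier {K : Set F} {b : F → F}
    (h : ∀ x ∈ frontier K, ∀ s ∈ normalCone K x, ⟪s, b x⟫ ≤ 0) {x s : F} (hx : x ∈ K)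
    (hs : s ∈ normalCone K x) : ⟪s, b x⟫ ≤ 0 := by
  by_cases hint : x ∈ interior K
  · rw [eq_zero_of_mem_normalCone_of_mem_interior hint hs, inner_zero_left]
  · exact h x ⟨subset_closure hx, hint⟩ s hs

theorem Convex.exists_infDist_eq_norm_sub_mem_normalCone {K : Set F} (hK : Convex ℝ K)
    (hKc : IsComplete K) (hne : K.Nonempty) (u : F) :
    ∃ p ∈ K, infDist u K = ‖u - p‖ ∧ u - p ∈ normalCone K p := by
  obtain ⟨p, hp, hmin⟩ := exists_norm_eq_iInf_of_complete_convex hne hKc hK u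
  refine ⟨p, hp, ?_, (norm_eq_iInf_iff_real_inner_le_zero hK hp).1 hmin⟩
  simp_rw [hmin, infDist_eq_iInf, dist_eq_norm]

theorem LipschitzWith.inner_sub_apply_le {b : F → F} {L : ℝ≥0} (hb : LipschitzWith L b)
    {u p : F} (hp : ⟪u - p, b p⟫ ≤ 0) : ⟪u - p, b u⟫ ≤ L * ‖u - p‖ ^ 2 :=
  calc ⟪u - p, b u⟫ = ⟪u - p, b u - b p⟫ + ⟪u - p, b p⟫ := by rw [inner_sub_right]; ring
    _ ≤ ‖u - p‖ * (L * ‖u - p‖) + 0 := by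
      gcongr
      exact (real_inner_le_norm _ _).trans (by gcongr; exact hb.norm_sub_le u p)
    _ = L * ‖u - p‖ ^ 2 := by ring

theorem inner_nonpos_of_hasDerivWithinAt_of_mem_normalCone {K : Set F} {X : ℝ → F} {v s : F}
    {T : ℝ} (hT : 0 < T) (hX : HasDerivWithinAt X v (Icc 0 T) 0)
    (hXK : ∀ t ∈ Icc 0 T, X t ∈ K) (hs : s ∈ normalCone K (X 0)) : ⟪s, v⟫ ≤ 0 := by
  have hmax : IsLocalMaxOn (fun t ↦ ⟪s, X t⟫) (Icc 0 T) 0 := IsMaxOn.localize fun t ht ↦ by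
    have := hs _ (hXK t ht)
    rwa [inner_sub_right, sub_nonpos] at this
  have hderiv : HasDerivWithinAt (fun t ↦ ⟪s, X t⟫) ⟪s, v⟫ (Icc 0 T) 0 := by
    simpa using (hasDerivWithinAt_const 0 (Icc 0 T) s).inner ℝ hX
  have hT' : T ∈ posTangentConeAt (Icc 0 T) 0 :=
    mem_posTangentConeAt_of_segment_subset (by rw [zero_add, segment_eq_Icc hT.le])
  have h := hmax.hasFDerivWithinAt_nonpos hderiv.hasFDerivWithinAt hT'
  rw [ContinuousLinearMap.toSpanSingleton_apply, smul_eq_mul] at h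
  exact nonpos_of_mul_nonpos_right h hT

theorem frequently_slope_infDist_sq_lt {K : Set F} (hK : Convex ℝ K) (hKc : IsComplete K)
    (hne : K.Nonempty) {b : F → F} {L : ℝ≥0} (hb : LipschitzWith L b)
    (htan : ∀ x ∈ K, ∀ s ∈ normalCone K x, ⟪s, b x⟫ ≤ 0) {X : ℝ → F} {t : ℝ}
    (hX : HasDerivWithinAt X (b (X t)) (Ici t) t) {r : ℝ}
    (hr : 2 * L * infDist (X t) K ^ 2 < r) :
    ∃ᶠ z in 𝓝[>] t, slope (fun z ↦ infDist (X z) K ^ 2) t z < r := by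
  obtain ⟨p, hpK, hdist, hnormal⟩ := hK.exists_infDist_eq_norm_sub_mem_normalCone hKc hne (X t)
  refine frequently_slope_lt_of_le_of_hasDerivWithinAt (hX.sub_const p).norm_sq (fun z ↦ ?_)
    (by rw [hdist]) (lt_of_le_of_lt ?_ hr)
  · gcongr
    · exact infDist_nonneg
    · rw [← dist_eq_norm]
      exact infDist_le_dist_of_mem hpK
  · rw [hdist]
    linarith [hb.inner_sub_apply_le (htan p hpK _ hnormal)]

theorem Convex.forall_mem_Icc_mem_of_inner_normalCone_nonpos [CompleteSpace F] {K : Set F}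
    (hK : Convex ℝ K) (hKc : IsClosed K) {b : F → F} {L : ℝ≥0} (hb : LipschitzWith L b)
    (htan : ∀ x ∈ frontier K, ∀ s ∈ normalCone K x, ⟪s, b x⟫ ≤ 0) {X : ℝ → F} {T : ℝ}
    (hX0 : X 0 ∈ K) (hX : ∀ t ∈ Icc 0 T, HasDerivWithinAt X (b (X t)) (Icc 0 T) t) :
    ∀ t ∈ Icc 0 T, X t ∈ K := by
  have hne : K.Nonempty := ⟨_, hX0⟩
  have hbound := le_gronwallBound_of_liminf_deriv_right_le
    (f := fun t ↦ infDist (X t) K ^ 2) (f' := fun t ↦ 2 * L * infDist (X t) K ^ 2)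
    (δ := 0) (K := 2 * L) (ε := 0)
    (((continuous_infDist_pt K).comp_continuousOn (HasDerivWithinAt.continuousOn hX)).pow 2)
    (fun t ht r hr ↦ frequently_slope_infDist_sq_lt hK hKc.isComplete hne hb
      (fun x hx s hs ↦ inner_nonpos_of_mem_normalCone_of_frontier htan hx hs)
      ((hX t (Ico_subset_Icc_self ht)).mono_of_mem_nhdsWithin (Icc_mem_nhdsGE_of_mem ht)) hr)
    (by simp [infDist_zero_of_mem hX0]) (fun _ _ ↦ (add_zero _).ge)
  intro t ht
  have h0 : infDist (X t) K = 0 := by simpa [gronwallBound_ε0_δ0] using hbound t ht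
  exact (hKc.mem_iff_infDist_zero hne).2 h0

end NormalCone

theorem ode_invariance_iff_normal_cone_tangency_general
    (d : ℕ) (T : ℝ) (hT : 0 < T)
    (K : Set (EuclideanSpace ℝ (Fin d))) (hKcl : IsClosed K) (hKconv : Convex ℝ K)
    (b : EuclideanSpace ℝ (Fin d) → EuclideanSpace ℝ (Fin d))
    (L : NNReal) (hbL : LipschitzWith L b) :
    (∀ x₀ ∈ K, ∀ X : ℝ → EuclideanSpace ℝ (Fin d), X 0 = x₀ →
        (∀ t ∈ Set.Icc 0 T, HasDerivWithinAt X (b (X t)) (Set.Icc 0 T) t) →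
        ∀ t ∈ Set.Icc 0 T, X t ∈ K)
    ↔ (∀ x ∈ frontier K, ∀ s : EuclideanSpace ℝ (Fin d),
        (∀ y ∈ K, ⟪s, y - x⟫ ≤ 0) → ⟪s, b x⟫ ≤ 0) := by
  constructor
  · intro hinv x hx s hs
    obtain ⟨X, hX0, hX⟩ := hbL.exists_forall_mem_Icc_hasDerivWithinAt x T
    have hXK := hinv x (hKcl.frontier_subset hx) X hX0 hX
    rw [← hX0] at hs ⊢
    exact inner_nonpos_of_hasDerivWithinAt_of_mem_normalCone hT (hX 0 ⟨le_rfl, hT.le⟩) hXK hs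
  · intro htan x₀ hx₀ X hX0 hX
    exact hKconv.forall_mem_Icc_mem_of_inner_normalCone_nonpos hKcl hbL htan (hX0 ▸ hx₀) hX

/-- Deterministic invariance characterization (Coutin–Marie, case `σ ≡ 0`):
for a closed convex set `K ⊆ ℝ^d` and a `C¹`, Lipschitz vector field `b`, all
solutions of `Ẋ = b(X)` starting in `K` remain in `K` on `[0,T]` if and only if
`⟨s, b(x)⟩ ≤ 0` for every `x ∈ ∂K` and every `s` in the normal cone to `K` at `x`. -/
theorem ode_invariance_iff_normal_cone_tangency
    (d : ℕ) (T : ℝ) (hT : 0 < T)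
    (K : Set (EuclideanSpace ℝ (Fin d))) (hKcl : IsClosed K) (hKconv : Convex ℝ K)
    (b : EuclideanSpace ℝ (Fin d) → EuclideanSpace ℝ (Fin d))
    (hb : ContDiff ℝ 1 b) (L : NNReal) (hbL : LipschitzWith L b) :
    (∀ x₀ ∈ K, ∀ X : ℝ → EuclideanSpace ℝ (Fin d), X 0 = x₀ →
        (∀ t ∈ Set.Icc 0 T, HasDerivWithinAt X (b (X t)) (Set.Icc 0 T) t) →
        ∀ t ∈ Set.Icc 0 T, X t ∈ K)
    ↔ (∀ x ∈ frontier K, ∀ s : EuclideanSpace ℝ (Fin d),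
        (∀ y ∈ K, ⟪s, y - x⟫ ≤ 0) → ⟪s, b x⟫ ≤ 0) :=
  ode_invariance_iff_normal_cone_tangency_general d T hT K hKcl hKconv b L hbL
end

section
/- Let C ⊂ ℝ^{d−1} be a convex compact set and K := C × ℝ ⊂ ℝ^d. Let b : ℝ^d → ℝ^d be continuously differentiable, suppose its last component b_d : ℝ^d → ℝ is Lipschitz continuous, and suppose that for every x ∈ ∂K and every s ∈ ℝ^d with ⟨s, y − x⟩ ≤ 0 for all y ∈ K one has ⟨s, b(x)⟩ ≤ 0. Then for every X₀ ∈ K the ordinary differential equation Ẋ(t) = b(X(t)), X(0) = X₀ has a unique solution X defined on all of [0,T], and X(t) ∈ K for every t ∈ [0,T]. -/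
/-!
Let `P` be the metric projection onto `K` and `Q` the map clamping the last coordinate to
`[-ρ, ρ]`. Since `K = C × ℝ`, `P ∘ Q` is `1`-Lipschitz with values in the compact set
`C × [-ρ, ρ]`, so the truncated field `b ∘ P ∘ Q` is globally Lipschitz and bounded and has a
solution `X` on `[0, T]`. The projection `P` commutes with vertical translations, hence
`Q x - P (Q x) = x - P x`, and the tangency condition at the boundary point `P (Q x)` makes the
right Dini derivative of `dist (X t, K) ^ 2` nonpositive: `X` stays in `K`. On `K` the norm is
controlled by the last coordinate, so `|ẋ_d| ≤ ε + L |x_d|` along `X`, and Grönwall bounds `x_d`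
on `[0, T]` independently of `ρ`. Choosing `ρ` to be that bound, `P` and `Q` fix `X`, which
therefore solves the original equation. Uniqueness holds because a `C¹` field is Lipschitz on
the compact set swept out by two solutions.
-/

open scoped RealInnerProductSpace NNReal
open Set Filter Topology

section ODE

variable {E G : Type*} [NormedAddCommGroup E] [NormedSpace ℝ E]
  [NormedAddCommGroup G] [NormedSpace ℝ G]

lemma HasDerivWithinAt.Ici_of_Icc {f : ℝ → E} {f' : E} {a b t : ℝ}
    (h : HasDerivWithinAt f f' (Icc a b) t) (ht : t ∈ Ico a b) :
    HasDerivWithinAt f f' (Ici t) t :=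
  h.mono_of_mem_nhdsWithin (Icc_mem_nhdsGE_of_mem ht)

lemma frequently_slope_lt_of_le_of_hasDerivWithinAt_s11 {f g : ℝ → ℝ} {g' x r : ℝ}
    (hfg : ∀ z, f z ≤ g z) (hx : f x = g x) (hg : HasDerivWithinAt g g' (Ici x) x)
    (hr : g' < r) : ∃ᶠ z in 𝓝[>] x, slope f x z < r := by
  have hslope : Tendsto (slope g x) (𝓝[>] x) (𝓝 g') :=
    (hasDerivWithinAt_iff_tendsto_slope' (lt_irrefl x)).1 hg.Ioi_of_Ici
  refine ((hslope.eventually_lt_const hr).and self_mem_nhdsWithin).frequently.mono ?_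
  rintro z ⟨hz, hxz : x < z⟩
  refine lt_of_le_of_lt ?_ hz
  rw [slope_def_field, slope_def_field, hx]
  exact div_le_div_of_nonneg_right (by linarith [hfg z]) (sub_pos.2 hxz).le

lemma ContDiff.exists_lipschitzOnWith_of_isCompact {b : E → G} (hb : ContDiff ℝ 1 b)
    {s : Set E} (hs : IsCompact s) : ∃ K, LipschitzOnWith K b s :=
  hb.locallyLipschitz.locallyLipschitzOn.exists_lipschitzOnWith_of_compact hs

theorem ContDiff.eqOn_Icc_of_hasDerivWithinAt {b : E → E} (hb : ContDiff ℝ 1 b)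
    {X Y : ℝ → E} {a c : ℝ}
    (hX : ∀ t ∈ Icc a c, HasDerivWithinAt X (b (X t)) (Icc a c) t)
    (hY : ∀ t ∈ Icc a c, HasDerivWithinAt Y (b (Y t)) (Icc a c) t) (h : X a = Y a) :
    EqOn X Y (Icc a c) := by
  have hXc : ContinuousOn X (Icc a c) := fun t ht => (hX t ht).continuousWithinAt
  have hYc : ContinuousOn Y (Icc a c) := fun t ht => (hY t ht).continuousWithinAt
  obtain ⟨K, hK⟩ := hb.exists_lipschitzOnWith_of_isCompact
    ((isCompact_Icc.image_of_continuousOn hXc).union (isCompact_Icc.image_of_continuousOn hYc))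
  exact ODE_solution_unique_of_mem_Icc_right (v := fun _ => b) (fun _ _ => hK)
    hXc (fun t ht => (hX t (Ico_subset_Icc_self ht)).Ici_of_Icc ht)
    (fun t ht => .inl (mem_image_of_mem X (Ico_subset_Icc_self ht)))
    hYc (fun t ht => (hY t (Ico_subset_Icc_self ht)).Ici_of_Icc ht)
    (fun t ht => .inr (mem_image_of_mem Y (Ico_subset_Icc_self ht))) h

lemma exists_forall_hasDerivWithinAt_Icc_of_lipschitzWith [CompleteSpace E] {v : E → E}
    {K M : ℝ≥0} (hv : LipschitzWith K v) (hM : ∀ x, ‖v x‖ ≤ M) {a c : ℝ} (hac : a ≤ c)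
    (x₀ : E) :
    ∃ X : ℝ → E, X a = x₀ ∧ ∀ t ∈ Icc a c, HasDerivWithinAt X (v (X t)) (Icc a c) t :=
  (IsPicardLindelof.of_time_independent (t₀ := ⟨a, left_mem_Icc.2 hac⟩) (x₀ := x₀)
    (a := M * ⟨c - a, sub_nonneg.2 hac⟩) (r := 0) (fun x _ => hM x) hv.lipschitzOnWith
    (by simp [hac]; rfl)).exists_eq_forall_mem_Icc_hasDerivWithinAt₀

lemma ContDiff.exists_forall_hasDerivWithinAt_Icc_comp [CompleteSpace E] {b g : E → E}
    (hb : ContDiff ℝ 1 b) {Kg : ℝ≥0} (hg : LipschitzWith Kg g) {D : Set E} (hD : IsCompact D)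
    (hgD : ∀ x, g x ∈ D) {a c : ℝ} (hac : a ≤ c) (x₀ : E) :
    ∃ X : ℝ → E, X a = x₀ ∧
      ∀ t ∈ Icc a c, HasDerivWithinAt X (b (g (X t))) (Icc a c) t := by
  obtain ⟨K, hK⟩ := hb.exists_lipschitzOnWith_of_isCompact hD
  obtain ⟨M, hM⟩ := hD.exists_bound_of_continuousOn hb.continuous.continuousOn
  refine exists_forall_hasDerivWithinAt_Icc_of_lipschitzWith (K := K * Kg) (M := M.toNNReal)
    ?_ (fun x => (hM _ (hgD x)).trans (Real.le_coe_toNNReal M)) hac x₀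
  exact lipschitzOnWith_univ.1 (hK.comp hg.lipschitzOnWith fun x _ => hgD x)

end ODE

section InnerProductSpace

variable {F : Type*} [NormedAddCommGroup F] [InnerProductSpace ℝ F]

structure IsMetricProjection (S : Set F) (P : F → F) : Prop where
  mem : ∀ u, P u ∈ S
  inner_sub_le_zero : ∀ u, ∀ w ∈ S, ⟪u - P u, w - P u⟫ ≤ 0

lemma exists_isMetricProjection [CompleteSpace F] {S : Set F} (hne : S.Nonempty)
    (hc : IsClosed S) (hconv : Convex ℝ S) : ∃ P : F → F, IsMetricProjection S P := by
  choose P hPS hP using exists_norm_eq_iInf_of_complete_convex hne hc.isComplete hconv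
  exact ⟨P, hPS, fun u => (norm_eq_iInf_iff_real_inner_le_zero hconv (hPS u)).1 (hP u)⟩

def clampAlong (e : F) (ρ : ℝ) (x : F) : F := x + (max (-ρ) (min ρ ⟪e, x⟫) - ⟪e, x⟫) • e

section ClampAlong

variable {e : F} {ρ : ℝ}

lemma inner_clampAlong (he : ‖e‖ = 1) (x : F) :
    ⟪e, clampAlong e ρ x⟫ = max (-ρ) (min ρ ⟪e, x⟫) := by
  simp [clampAlong, inner_add_right, inner_smul_right, he]

lemma clampAlong_of_abs_le {x : F} (h : |⟪e, x⟫| ≤ ρ) : clampAlong e ρ x = x := by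
  rw [abs_le] at h
  simp [clampAlong, min_eq_right h.2, max_eq_right h.1]

lemma abs_inner_clampAlong_le (he : ‖e‖ = 1) (hρ : 0 ≤ ρ) (x : F) :
    |⟪e, clampAlong e ρ x⟫| ≤ |⟪e, x⟫| := by
  rw [inner_clampAlong he]
  rcases le_total 0 ⟪e, x⟫ with h | h
  · rw [abs_of_nonneg (le_max_of_le_right (le_min hρ h)), abs_of_nonneg h]
    exact max_le (by linarith) (min_le_right _ _)
  · rw [abs_of_nonpos (max_le (by linarith) (min_le_of_right_le h)), abs_of_nonpos h]
    exact neg_le_neg (le_max_of_le_right (le_min (h.trans hρ) le_rfl))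

lemma isMetricProjection_clampAlong (he : ‖e‖ = 1) (hρ : 0 ≤ ρ) :
    IsMetricProjection {x | |⟪e, x⟫| ≤ ρ} (clampAlong e ρ) where
  mem x := by
    change |⟪e, clampAlong e ρ x⟫| ≤ ρ
    rw [inner_clampAlong he, abs_le]
    exact ⟨le_max_left _ _, max_le (by linarith) (min_le_left _ _)⟩
  inner_sub_le_zero x w hw := by
    obtain ⟨hw₁, hw₂⟩ := abs_le.1 (show |⟪e, w⟫| ≤ ρ from hw)
    have hsub : x - clampAlong e ρ x = (⟪e, x⟫ - max (-ρ) (min ρ ⟪e, x⟫)) • e := by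
      simp only [clampAlong]
      module
    rw [hsub, inner_smul_left, inner_sub_right, inner_clampAlong he, RCLike.conj_to_real]
    rcases le_total ⟪e, x⟫ (-ρ) with h | h
    · rw [min_eq_right (h.trans (by linarith)), max_eq_left h]
      nlinarith
    rcases le_total ⟪e, x⟫ ρ with h' | h'
    · rw [min_eq_right h', max_eq_right h, sub_self, zero_mul]
    · rw [min_eq_left h', max_eq_right (by linarith)]
      nlinarith

end ClampAlong

namespace IsMetricProjection

variable {S : Set F} {P : F → F}

lemma eq_of_forall_inner_le_zero (hP : IsMetricProjection S P) {u p : F} (hp : p ∈ S)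
    (h : ∀ w ∈ S, ⟪u - p, w - p⟫ ≤ 0) : P u = p := by
  have h₁ := hP.inner_sub_le_zero u p hp
  have h₂ := h (P u) (hP.mem u)
  have : ‖P u - p‖ ^ 2 = ⟪u - P u, p - P u⟫ + ⟪u - p, P u - p⟫ := by
    rw [← real_inner_self_eq_norm_sq]
    simp only [inner_sub_left, inner_sub_right, real_inner_comm]
    ring
  rw [← sub_eq_zero, ← norm_eq_zero]
  exact pow_eq_zero_iff two_ne_zero |>.1 (le_antisymm (by linarith) (sq_nonneg _))

lemma apply_eq_self (hP : IsMetricProjection S P) {u : F} (hu : u ∈ S) : P u = u :=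
  hP.eq_of_forall_inner_le_zero hu fun w _ => by simp

lemma norm_sub_apply_le (hP : IsMetricProjection S P) {u w : F} (hw : w ∈ S) :
    ‖u - P u‖ ≤ ‖u - w‖ := by
  have h := hP.inner_sub_le_zero u w hw
  have : ‖u - w‖ ^ 2 = ‖u - P u‖ ^ 2 - 2 * ⟪u - P u, w - P u⟫ + ‖w - P u‖ ^ 2 := by
    rw [← norm_sub_sq_real]
    congr 2
    abel
  exact (pow_le_pow_iff_left₀ (norm_nonneg _) (norm_nonneg _) two_ne_zero).1
    (by nlinarith [sq_nonneg ‖w - P u‖])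

lemma lipschitzWith_one (hP : IsMetricProjection S P) : LipschitzWith 1 P := by
  refine LipschitzWith.of_dist_le_mul fun u v => ?_
  rw [NNReal.coe_one, one_mul, dist_eq_norm, dist_eq_norm]
  have h₁ := hP.inner_sub_le_zero u (P v) (hP.mem v)
  have h₂ := hP.inner_sub_le_zero v (P u) (hP.mem u)
  have key : ‖P u - P v‖ ^ 2 ≤ ‖u - v‖ * ‖P u - P v‖ := by
    calc ‖P u - P v‖ ^ 2 ≤ ⟪u - v, P u - P v⟫ := by
          rw [← real_inner_self_eq_norm_sq]
          simp only [inner_sub_left, inner_sub_right, real_inner_comm] at h₁ h₂ ⊢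
          linarith
      _ ≤ ‖u - v‖ * ‖P u - P v‖ := real_inner_le_norm _ _
  rcases (norm_nonneg (P u - P v)).eq_or_lt with h | h
  · rw [← h]
    exact norm_nonneg _
  · nlinarith

lemma apply_mem_frontier (hP : IsMetricProjection S P) {u : F} (hu : u ∉ S) :
    P u ∈ frontier S := by
  refine ⟨subset_closure (hP.mem u), fun hint => hu ?_⟩
  have hmax : IsLocalMax (fun y => ⟪u - P u, y⟫) (P u) :=
    Filter.mem_of_superset (mem_interior_iff_mem_nhds.1 hint) fun w hw => by
      simpa [inner_sub_right] using hP.inner_sub_le_zero u w hw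
  have h := congrArg (· (u - P u)) (hmax.hasFDerivAt_eq_zero (innerSL ℝ (u - P u)).hasFDerivAt)
  simp only [innerSL_apply_apply, zero_apply, inner_self_eq_zero, sub_eq_zero] at h
  exact h ▸ hP.mem u

lemma inner_sub_apply_le_zero (hP : IsMetricProjection S P) {b : F → F}
    (htang : ∀ x ∈ frontier S, ∀ s : F, (∀ y ∈ S, ⟪s, y - x⟫ ≤ 0) → ⟪s, b x⟫ ≤ 0) (u : F) :
    ⟪u - P u, b (P u)⟫ ≤ 0 := by
  by_cases hu : u ∈ S
  · simp [hP.apply_eq_self hu]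
  · exact htang _ (hP.apply_mem_frontier hu) _ (hP.inner_sub_le_zero u)

theorem mapsTo_of_hasDerivWithinAt (hP : IsMetricProjection S P) {X v : ℝ → F} {a c : ℝ}
    (hX : ∀ t ∈ Icc a c, HasDerivWithinAt X (v t) (Icc a c) t) (ha : X a ∈ S)
    (hv : ∀ t ∈ Ico a c, ⟪X t - P (X t), v t⟫ ≤ 0) : MapsTo X (Icc a c) S := by
  have hXc : ContinuousOn X (Icc a c) := fun t ht => (hX t ht).continuousWithinAt
  -- `‖X z - P (X t)‖ ^ 2` touches `‖X z - P (X z)‖ ^ 2` from above at `z = t`.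
  have hdist : ∀ t ∈ Icc a c, ‖X t - P (X t)‖ ^ 2 ≤ 0 :=
    image_le_of_liminf_slope_right_le_deriv_boundary (B := fun _ => 0) (B' := fun _ => 0)
      ((hXc.sub (hP.lipschitzWith_one.continuous.comp_continuousOn hXc)).norm.pow 2)
      (by simp [hP.apply_eq_self ha]) continuousOn_const
      (fun t _ => hasDerivWithinAt_const t _ 0)
      fun t ht r hr => frequently_slope_lt_of_le_of_hasDerivWithinAt_s11
        (g := fun z => ‖X z - P (X t)‖ ^ 2)
        (fun z => pow_le_pow_left₀ (norm_nonneg _) (hP.norm_sub_apply_le (hP.mem _)) 2) rfl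
        (((hX t (Ico_subset_Icc_self ht)).Ici_of_Icc ht).sub_const _).norm_sq
        (by linarith [hv t ht])
  intro t ht
  have h0 : X t - P (X t) = 0 :=
    norm_eq_zero.1 (pow_eq_zero_iff two_ne_zero |>.1 (le_antisymm (hdist t ht) (sq_nonneg _)))
  rw [sub_eq_zero.1 h0]
  exact hP.mem _

variable {e : F}

lemma apply_add_smul (hP : IsMetricProjection S P) (hSe : ∀ x ∈ S, ∀ t : ℝ, x + t • e ∈ S)
    (u : F) (t : ℝ) : P (u + t • e) = P u + t • e := by
  refine hP.eq_of_forall_inner_le_zero (hSe _ (hP.mem u) t) fun w hw => ?_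
  convert hP.inner_sub_le_zero u _ (hSe w hw (-t)) using 2 <;> module

lemma inner_apply (hP : IsMetricProjection S P) (hSe : ∀ x ∈ S, ∀ t : ℝ, x + t • e ∈ S)
    (u : F) : ⟪e, P u⟫ = ⟪e, u⟫ := by
  have h₁ := hP.inner_sub_le_zero u _ (hSe _ (hP.mem u) 1)
  have h₂ := hP.inner_sub_le_zero u _ (hSe _ (hP.mem u) (-1))
  simp only [add_sub_cancel_left, one_smul, neg_smul, inner_neg_right, inner_sub_right,
    real_inner_comm e] at h₁ h₂
  linarith

lemma clampAlong_sub_apply (hP : IsMetricProjection S P)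
    (hSe : ∀ x ∈ S, ∀ t : ℝ, x + t • e ∈ S) (ρ : ℝ) (x : F) :
    clampAlong e ρ x - P (clampAlong e ρ x) = x - P x := by
  rw [clampAlong, hP.apply_add_smul hSe, add_sub_add_right_eq_sub]

lemma abs_inner_apply_clampAlong_le (hP : IsMetricProjection S P)
    (hSe : ∀ x ∈ S, ∀ t : ℝ, x + t • e ∈ S) {B : ℝ} (hSB : ∀ x ∈ S, ‖x‖ ≤ B + |⟪e, x⟫|)
    (he : ‖e‖ = 1) {ρ : ℝ} (hρ : 0 ≤ ρ) {b : F → F} {L : ℝ≥0}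
    (hbe : LipschitzWith L fun x => ⟪e, b x⟫) (x : F) :
    |⟪e, b (P (clampAlong e ρ x))⟫| ≤ L * |⟪e, x⟫| + (|⟪e, b 0⟫| + L * B) := by
  have hlip := hbe.dist_le_mul (P (clampAlong e ρ x)) 0
  rw [Real.dist_eq, dist_zero_right] at hlip
  have hnorm := hSB _ (hP.mem (clampAlong e ρ x))
  rw [hP.inner_apply hSe] at hnorm
  have := abs_inner_clampAlong_le he hρ x
  have := abs_sub_abs_le_abs_sub ⟪e, b (P (clampAlong e ρ x))⟫ ⟪e, b 0⟫
  nlinarith [L.2]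

end IsMetricProjection

lemma isCompact_inter_setOf_abs_inner_le [ProperSpace F] {K : Set F} (hKc : IsClosed K)
    {e : F} {B : ℝ} (hKB : ∀ x ∈ K, ‖x‖ ≤ B + |⟪e, x⟫|) (ρ : ℝ) :
    IsCompact (K ∩ {x | |⟪e, x⟫| ≤ ρ}) := by
  refine Metric.isCompact_of_isClosed_isBounded
    (hKc.inter (isClosed_le (by fun_prop) continuous_const)) ?_
  refine isBounded_iff_forall_norm_le.2 ⟨B + ρ, fun x hx => ?_⟩
  linarith [hKB x hx.1, show |⟪e, x⟫| ≤ ρ from hx.2]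

lemma abs_inner_le_gronwallBound {v : F → F} {X : ℝ → F} {e : F} {L ε T : ℝ}
    (hX : ∀ t ∈ Icc 0 T, HasDerivWithinAt X (v (X t)) (Icc 0 T) t)
    (hv : ∀ x, |⟪e, v x⟫| ≤ L * |⟪e, x⟫| + ε) :
    ∀ t ∈ Icc 0 T, |⟪e, X t⟫| ≤ gronwallBound |⟪e, X 0⟫| L ε t := by
  have := norm_le_gronwallBound_of_norm_deriv_right_le (f := fun t => ⟪e, X t⟫)
    (f' := fun t => ⟪e, v (X t)⟫) (δ := |⟪e, X 0⟫|) (K := L) (ε := ε)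
    (continuousOn_const.inner fun t ht => (hX t ht).continuousWithinAt)
    (fun t ht => (innerSL ℝ e).hasFDerivAt.comp_hasDerivWithinAt t
      ((hX t (Ico_subset_Icc_self ht)).Ici_of_Icc ht)) le_rfl (fun x _ => hv (X x))
  simpa using this

theorem exists_mapsTo_hasDerivWithinAt_of_tangent [FiniteDimensional ℝ F]
    {K : Set F} (hKc : IsClosed K) (hKconv : Convex ℝ K)
    {e : F} (he : ‖e‖ = 1) (hKe : ∀ x ∈ K, ∀ t : ℝ, x + t • e ∈ K)
    {B : ℝ} (hKB : ∀ x ∈ K, ‖x‖ ≤ B + |⟪e, x⟫|)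
    {b : F → F} (hb : ContDiff ℝ 1 b) {L : ℝ≥0} (hbe : LipschitzWith L fun x => ⟪e, b x⟫)
    (htang : ∀ x ∈ frontier K, ∀ s : F, (∀ y ∈ K, ⟪s, y - x⟫ ≤ 0) → ⟪s, b x⟫ ≤ 0)
    {T : ℝ} (hT : 0 ≤ T) {x₀ : F} (hx₀ : x₀ ∈ K) :
    ∃ X : ℝ → F, X 0 = x₀ ∧ (∀ t ∈ Icc 0 T, HasDerivWithinAt X (b (X t)) (Icc 0 T) t) ∧
      MapsTo X (Icc 0 T) K := by
  obtain ⟨P, hP⟩ := exists_isMetricProjection ⟨x₀, hx₀⟩ hKc hKconv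
  have hB : 0 ≤ B := by
    have := abs_real_inner_le_norm e x₀
    rw [he, one_mul] at this
    linarith [hKB x₀ hx₀]
  set ε := |⟪e, b 0⟫| + L * B
  set ρ := gronwallBound |⟪e, x₀⟫| L ε T
  have hρmono : ∀ t ∈ Icc 0 T, gronwallBound |⟪e, x₀⟫| L ε t ≤ ρ := fun t ht =>
    gronwallBound_mono (abs_nonneg _) (by positivity) L.2 ht.2
  have hρ : 0 ≤ ρ := (abs_nonneg _).trans
    ((gronwallBound_x0 ..).symm.trans_le (hρmono 0 (left_mem_Icc.2 hT)))
  have hQ := isMetricProjection_clampAlong he hρ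
  obtain ⟨X, hX0, hX⟩ : ∃ X : ℝ → F, X 0 = x₀ ∧
      ∀ t ∈ Icc 0 T, HasDerivWithinAt X (b (P (clampAlong e ρ (X t)))) (Icc 0 T) t :=
    hb.exists_forall_hasDerivWithinAt_Icc_comp (hP.lipschitzWith_one.comp hQ.lipschitzWith_one)
      (isCompact_inter_setOf_abs_inner_le hKc hKB ρ)
      (fun x => ⟨hP.mem _, show |⟪e, P (clampAlong e ρ x)⟫| ≤ ρ by
        rw [hP.inner_apply hKe]; exact hQ.mem x⟩) hT x₀
  have hXK : MapsTo X (Icc 0 T) K := hP.mapsTo_of_hasDerivWithinAt hX (hX0 ▸ hx₀) fun t _ =>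
    hP.clampAlong_sub_apply hKe ρ (X t) ▸ hP.inner_sub_apply_le_zero htang _
  have hXe : ∀ t ∈ Icc 0 T, |⟪e, X t⟫| ≤ ρ := fun t ht =>
    (abs_inner_le_gronwallBound hX (hP.abs_inner_apply_clampAlong_le hKe hKB he hρ hbe) t
      ht).trans (hX0 ▸ hρmono t ht)
  refine ⟨X, hX0, fun t ht => ?_, hXK⟩
  convert hX t ht using 2
  rw [clampAlong_of_abs_le (hXe t ht), hP.apply_eq_self (hXK ht)]

end InnerProductSpace

namespace EuclideanSpace

noncomputable def init (n : ℕ) : EuclideanSpace ℝ (Fin (n + 1)) →L[ℝ] EuclideanSpace ℝ (Fin n) :=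
  (EuclideanSpace.equiv (Fin n) ℝ).symm.toContinuousLinearMap.comp
    (ContinuousLinearMap.pi fun i => EuclideanSpace.proj i.castSucc)

variable {n : ℕ}

lemma init_apply (x : EuclideanSpace ℝ (Fin (n + 1))) :
    init n x = WithLp.toLp 2 (fun i : Fin n => x i.castSucc) := rfl

lemma init_add_smul_single_last (x : EuclideanSpace ℝ (Fin (n + 1))) (t : ℝ) :
    init n (x + t • single (Fin.last n) 1) = init n x := by
  ext i
  simp [init_apply]

lemma norm_sq_eq_norm_init_sq_add (x : EuclideanSpace ℝ (Fin (n + 1))) :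
    ‖x‖ ^ 2 = ‖init n x‖ ^ 2 + x (Fin.last n) ^ 2 := by
  simp [norm_sq_eq, init_apply, Fin.sum_univ_castSucc]

lemma norm_le_norm_init_add_abs (x : EuclideanSpace ℝ (Fin (n + 1))) :
    ‖x‖ ≤ ‖init n x‖ + |x (Fin.last n)| := by
  refine (pow_le_pow_iff_left₀ (norm_nonneg _) (by positivity) two_ne_zero).1 ?_
  rw [norm_sq_eq_norm_init_sq_add, ← sq_abs (x _)]
  nlinarith [norm_nonneg (init n x), abs_nonneg (x (Fin.last n))]

end EuclideanSpace

open EuclideanSpace in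
/-- Deterministic case of the paper's viability corollary: if `C ⊆ ℝ^{d-1}` is
convex and compact, `K = C × ℝ ⊆ ℝ^d`, `b` is `C¹` with Lipschitz last
component, and `b` satisfies the normal-cone tangency condition on `∂K`, then
for every initial condition in `K` the ODE `Ẋ = b(X)` has a unique solution on
all of `[0,T]`, and this solution stays in `K`. -/
theorem ode_viability_corollary_compact_times_line
    (n : ℕ) (T : ℝ) (hT : 0 < T)
    (C : Set (EuclideanSpace ℝ (Fin n))) (hCconv : Convex ℝ C) (hCcomp : IsCompact C)
    (K : Set (EuclideanSpace ℝ (Fin (n + 1))))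
    (hK : ∀ x : EuclideanSpace ℝ (Fin (n + 1)),
      x ∈ K ↔ (WithLp.toLp 2 (fun i : Fin n => x i.castSucc) : EuclideanSpace ℝ (Fin n)) ∈ C)
    (b : EuclideanSpace ℝ (Fin (n + 1)) → EuclideanSpace ℝ (Fin (n + 1)))
    (hb : ContDiff ℝ 1 b)
    (L : NNReal) (hbd : LipschitzWith L (fun x => b x (Fin.last n)))
    (htang : ∀ x ∈ frontier K, ∀ s : EuclideanSpace ℝ (Fin (n + 1)),
        (∀ y ∈ K, ⟪s, y - x⟫ ≤ 0) → ⟪s, b x⟫ ≤ 0) :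
    ∀ X₀ ∈ K,
      (∃ X : ℝ → EuclideanSpace ℝ (Fin (n + 1)), X 0 = X₀ ∧
        (∀ t ∈ Set.Icc 0 T, HasDerivWithinAt X (b (X t)) (Set.Icc 0 T) t) ∧
        (∀ t ∈ Set.Icc 0 T, X t ∈ K)) ∧
      (∀ X Y : ℝ → EuclideanSpace ℝ (Fin (n + 1)),
        (X 0 = X₀ ∧ ∀ t ∈ Set.Icc 0 T, HasDerivWithinAt X (b (X t)) (Set.Icc 0 T) t) →
        (Y 0 = X₀ ∧ ∀ t ∈ Set.Icc 0 T, HasDerivWithinAt Y (b (Y t)) (Set.Icc 0 T) t) →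
        Set.EqOn X Y (Set.Icc 0 T)) := by
  intro X₀ hX₀
  obtain rfl : K = init n ⁻¹' C := Set.ext hK
  set e : EuclideanSpace ℝ (Fin (n + 1)) := single (Fin.last n) 1
  have he : ∀ x, ⟪e, x⟫ = x (Fin.last n) := fun x => by simp [e, inner_single_left]
  have hKe : ∀ x ∈ init n ⁻¹' C, ∀ t : ℝ, x + t • e ∈ init n ⁻¹' C := fun x hx t => by
    rwa [mem_preimage, init_add_smul_single_last]
  obtain ⟨B, hB⟩ := hCcomp.isBounded.exists_norm_le
  have hKB : ∀ x ∈ init n ⁻¹' C, ‖x‖ ≤ B + |⟪e, x⟫| := fun x hx => by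
    rw [he]
    linarith [norm_le_norm_init_add_abs x, hB _ hx]
  refine ⟨exists_mapsTo_hasDerivWithinAt_of_tangent (hCcomp.isClosed.preimage (init n).continuous)
    (hCconv.linear_preimage (init n).toLinearMap) (by simp [e]) hKe hKB hb
    (by simpa only [he] using hbd) htang hT.le hX₀,
    fun X Y hX hY => hb.eqOn_Icc_of_hasDerivWithinAt hX.2 hY.2 (hX.1.trans hY.1.symm)⟩
end
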